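/- arXiv:2501.00047 — 4 statements merged into one kernel-verified Lean document; each statement's English description precedes it below -/
import Mathlib

section
/- Let A be a σ-set with |A| = n, with antiset A⁻ = {star x : x ∈ A}. Then the generated integer space 3^A := {X ⊕ Y : X ⊆ A, Y ⊆ A⁻} (using the fusion operation ⊕) has cardinality 3^n. -/
variable {α : Type*} [DecidableEq α]

/-- The *-intersection: `A ∗∩ B = {x ∈ A : star x ∈ B}`. -/
def sInter (star : α → α) (A B : Finset α) : Finset α :=
  A.filter (fun x => star x ∈ B)

/-- The *-difference: `A ∗ B = A \ (A ∗∩ B)`. -/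
def sDiff (star : α → α) (A B : Finset α) : Finset α :=
  A \ sInter star A B

/-- The fusion: `A ⊕ B = (A ∗ B) ∪ (B ∗ A)`. -/
def fusion (star : α → α) (A B : Finset α) : Finset α :=
  sDiff star A B ∪ sDiff star B A

/-- A σ-set: never contains an element together with its anti-element. -/
def IsSigmaSet (star : α → α) (A : Finset α) : Prop :=
  ∀ x ∈ A, star x ∉ A

/-- The generated space `⟨2^A, 2^B⟩ = {X ⊕ Y : X ⊆ A, Y ⊆ B}`. -/
def genSpace (star : α → α) (A B : Finset α) : Finset (Finset α) :=
  (A.powerset ×ˢ B.powerset).image (fun p => fusion star p.1 p.2)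

lemma mem_fusion (star : α → α) (X Y : Finset α) (z : α) :
    z ∈ fusion star X Y ↔ (z ∈ X ∧ star z ∉ Y) ∨ (z ∈ Y ∧ star z ∉ X) := by
  simp [fusion, sDiff, sInter, Finset.mem_union, Finset.mem_sdiff, Finset.mem_filter]
  tauto

lemma count_aux (star : α → α) (hinv : Function.Involutive star)
    (hne : ∀ x, star x ≠ x) :
    ∀ (A : Finset α), IsSigmaSet star A →
    ((A ∪ A.image star).powerset.filter (fun S => ∀ x ∈ S, star x ∉ S)).card
      = 3 ^ A.card := by
  intro A
  induction A using Finset.induction_on with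
  | empty =>
    intro _
    simp only [Finset.image_empty, Finset.union_empty, Finset.powerset_empty,
      Finset.card_empty, pow_zero]
    rw [Finset.filter_singleton]
    simp
  | @insert a A ha ih =>
    intro hσ
    have hA : IsSigmaSet star A := fun x hx => by
      have := hσ x (Finset.mem_insert_of_mem hx)
      exact fun h => this (Finset.mem_insert_of_mem h)
    have hsa_ne : star a ≠ a := hne a
    have hsaA : star a ∉ A := by
      have := hσ a (Finset.mem_insert_self a A)
      intro h; exact this (Finset.mem_insert_of_mem h)
    have haA' : a ∉ A.image star := by
      intro h
      obtain ⟨b, hb, hba⟩ := Finset.mem_image.mp h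
      exact hsaA (by rw [← hba, hinv b]; exact hb)
    have hsaA' : star a ∉ A.image star := by
      intro h
      obtain ⟨b, hb, hba⟩ := Finset.mem_image.mp h
      have : b = a := hinv.injective hba
      exact ha (this ▸ hb)
    -- target bijection
    set U := A ∪ A.image star with hU
    have haU : a ∉ U := by simp [hU, ha, haA']
    have hsaU : star a ∉ U := by simp [hU, hsaA, hsaA']
    have hU' : insert a A ∪ (insert a A).image star
        = insert a (insert (star a) U) := by
      simp only [hU, Finset.image_insert, Finset.insert_union, Finset.union_insert]
      exact Finset.insert_comm _ _ _
    rw [hU']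
    -- set up card_nbij'
    rw [Finset.card_insert_of_notMem ha, pow_succ, ← ih hA, mul_comm]
    have key : ((insert a (insert (star a) U)).powerset.filter
          (fun S => ∀ x ∈ S, star x ∉ S)).card
        = ((({∅, {a}, {star a}} : Finset (Finset α)) ×ˢ
            (U.powerset.filter (fun S => ∀ x ∈ S, star x ∉ S)))).card := by
      apply Finset.card_nbij' (i := fun S => (S ∩ {a, star a}, S \ {a, star a}))
        (j := fun p => p.1 ∪ p.2)
      · intro S hS
        rw [Finset.mem_coe, Finset.mem_filter, Finset.mem_powerset] at hS
        obtain ⟨hSsub, hSσ⟩ := hS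
        rw [Finset.mem_coe, Finset.mem_product]
        constructor
        · -- S ∩ {a, star a} ∈ {∅, {a}, {star a}}
          simp only [Finset.mem_insert, Finset.mem_singleton]
          by_cases h1 : a ∈ S
          · have h2 : star a ∉ S := hSσ a h1
            right; left
            ext x; simp only [Finset.mem_inter, Finset.mem_insert,
              Finset.mem_singleton]
            constructor
            · rintro ⟨hx, rfl | rfl⟩
              · rfl
              · exact absurd hx h2
            · rintro rfl; exact ⟨h1, Or.inl rfl⟩
          · by_cases h2 : star a ∈ S
            · right; right
              ext x; simp only [Finset.mem_inter, Finset.mem_insert,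
                Finset.mem_singleton]
              constructor
              · rintro ⟨hx, rfl | rfl⟩
                · exact absurd hx h1
                · rfl
              · rintro rfl; exact ⟨h2, Or.inr rfl⟩
            · left
              ext x; simp only [Finset.mem_inter, Finset.mem_insert,
                Finset.mem_singleton, Finset.notMem_empty, iff_false, not_and]
              rintro hx (rfl | rfl)
              · exact h1 hx
              · exact h2 hx
        · rw [Finset.mem_filter, Finset.mem_powerset]
          constructor
          · intro x hx
            rw [Finset.mem_sdiff] at hx
            have := hSsub hx.1
            simp only [Finset.mem_insert] at this
            rcases this with rfl | rfl | h
            · exact absurd (Finset.mem_insert_self x _) hx.2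
            · exact absurd (by simp) hx.2
            · exact h
          · intro x hx hsx
            rw [Finset.mem_sdiff] at hx hsx
            exact hSσ x hx.1 hsx.1
      · rintro ⟨I, S⟩ hp
        rw [Finset.mem_coe, Finset.mem_product] at hp
        obtain ⟨hI, hS⟩ := hp
        rw [Finset.mem_filter, Finset.mem_powerset] at hS
        obtain ⟨hSsub, hSσ⟩ := hS
        have hSU : ∀ x ∈ S, x ≠ a ∧ x ≠ star a := by
          intro x hx
          constructor <;> rintro rfl
          · exact haU (hSsub hx)
          · exact hsaU (hSsub hx)
        simp only [Finset.mem_insert, Finset.mem_singleton] at hI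
        rw [Finset.mem_coe, Finset.mem_filter, Finset.mem_powerset]
        constructor
        · intro x hx
          rw [Finset.mem_union] at hx
          rcases hx with hx | hx
          · rcases hI with rfl | rfl | rfl
            · exact absurd hx (Finset.notMem_empty x)
            · rw [Finset.mem_singleton] at hx
              rw [hx]; exact Finset.mem_insert_self _ _
            · rw [Finset.mem_singleton] at hx
              rw [hx]; exact Finset.mem_insert_of_mem (Finset.mem_insert_self _ _)
          · exact Finset.mem_insert_of_mem (Finset.mem_insert_of_mem (hSsub hx))
        · intro x hx
          rw [Finset.mem_union] at hx
          intro hsx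
          rw [Finset.mem_union] at hsx
          rcases hx with hx | hx
          · rcases hI with rfl | rfl | rfl
            · exact absurd hx (Finset.notMem_empty x)
            · rw [Finset.mem_singleton] at hx
              rw [hx] at hsx
              rcases hsx with hsx | hsx
              · rw [Finset.mem_singleton] at hsx; exact hne a hsx
              · exact hsaU (hSsub hsx)
            · rw [Finset.mem_singleton] at hx
              rw [hx, hinv a] at hsx
              rcases hsx with hsx | hsx
              · rw [Finset.mem_singleton] at hsx; exact hne a hsx.symm
              · exact haU (hSsub hsx)
          · rcases hsx with hsx | hsx
            · rcases hI with rfl | rfl | rfl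
              · exact absurd hsx (Finset.notMem_empty _)
              · rw [Finset.mem_singleton] at hsx
                have : x = star a := by rw [← hsx, hinv]
                exact (hSU x hx).2 this
              · rw [Finset.mem_singleton] at hsx
                have : x = a := by
                  have := congrArg star hsx; rwa [hinv, hinv] at this
                exact (hSU x hx).1 this
            · exact hSσ x hx hsx
      · -- left inverse
        intro S hS
        show S ∩ {a, star a} ∪ S \ {a, star a} = S
        rw [Finset.union_comm, Finset.sdiff_union_inter]
      · -- right inverse
        rintro ⟨I, S⟩ hp
        rw [Finset.mem_coe, Finset.mem_product] at hp
        obtain ⟨hI, hS⟩ := hp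
        rw [Finset.mem_filter, Finset.mem_powerset] at hS
        have hSdisj : S ∩ {a, star a} = ∅ := by
          rw [Finset.eq_empty_iff_forall_notMem]
          intro x hx
          rw [Finset.mem_inter, Finset.mem_insert, Finset.mem_singleton] at hx
          rcases hx.2 with rfl | rfl
          · exact haU (hS.1 hx.1)
          · exact hsaU (hS.1 hx.1)
        have hIsub : I ⊆ {a, star a} := by
          simp only [Finset.mem_insert, Finset.mem_singleton] at hI
          rcases hI with rfl | rfl | rfl
          · exact Finset.empty_subset _
          · intro x hx; rw [Finset.mem_singleton] at hx
            exact hx ▸ Finset.mem_insert_self _ _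
          · intro x hx; rw [Finset.mem_singleton] at hx
            rw [hx]; exact Finset.mem_insert_of_mem (Finset.mem_singleton_self _)
        have hSdisj' : Disjoint S {a, star a} := by
          rw [Finset.disjoint_iff_inter_eq_empty]; exact hSdisj
        ext1
        · simp only
          rw [Finset.union_inter_distrib_right, hSdisj,
            Finset.inter_eq_left.mpr hIsub, Finset.union_empty]
        · simp only
          rw [Finset.union_sdiff_distrib,
            Finset.sdiff_eq_empty_iff_subset.mpr hIsub,
            Finset.empty_union, Finset.sdiff_eq_self_of_disjoint hSdisj']
    rw [key, Finset.card_product]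
    congr 1
    rw [Finset.card_insert_of_notMem, Finset.card_insert_of_notMem,
      Finset.card_singleton]
    · simp only [Finset.mem_singleton, Finset.singleton_inj]
      exact fun h => hne a h.symm
    · simp only [Finset.mem_insert, Finset.mem_singleton]
      push_neg
      constructor
      · intro h; exact absurd (h ▸ Finset.mem_singleton_self a) (by simp)
      · intro h; exact absurd (h ▸ Finset.mem_singleton_self (star a)) (by simp)

lemma genSpace_eq (star : α → α) (hinv : Function.Involutive star)
    (A : Finset α) (hA : IsSigmaSet star A) :
    genSpace star A (A.image star)
      = (A ∪ A.image star).powerset.filter (fun S => ∀ x ∈ S, star x ∉ S) := by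
  ext S
  rw [genSpace, Finset.mem_image, Finset.mem_filter, Finset.mem_powerset]
  constructor
  · rintro ⟨⟨X, Y⟩, hp, rfl⟩
    rw [Finset.mem_product, Finset.mem_powerset, Finset.mem_powerset] at hp
    obtain ⟨hX, hY⟩ := hp
    constructor
    · intro z hz
      rw [mem_fusion] at hz
      rcases hz with ⟨hz, _⟩ | ⟨hz, _⟩
      · exact Finset.mem_union_left _ (hX hz)
      · exact Finset.mem_union_right _ (hY hz)
    · intro z hz hsz
      rw [mem_fusion] at hz hsz
      rcases hz with ⟨hz, hz'⟩ | ⟨hz, hz'⟩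
      · rcases hsz with ⟨hsz, _⟩ | ⟨hsz, _⟩
        · exact hA z (hX hz) (hX hsz)
        · exact hz' hsz
      · rcases hsz with ⟨hsz, _⟩ | ⟨hsz, _⟩
        · exact hz' hsz
        · -- z, star z ∈ Y ⊆ A.image star
          obtain ⟨b, hb, hbz⟩ := Finset.mem_image.mp (hY hz)
          obtain ⟨c, hc, hcz⟩ := Finset.mem_image.mp (hY hsz)
          have hcz' : c = z := hinv.injective hcz
          have : star b = c := by rw [hbz, hcz']
          exact hA b hb (this ▸ hc)
  · rintro ⟨hSsub, hSσ⟩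
    refine ⟨(S ∩ A, S ∩ A.image star), ?_, ?_⟩
    · rw [Finset.mem_product, Finset.mem_powerset, Finset.mem_powerset]
      exact ⟨Finset.inter_subset_right, Finset.inter_subset_right⟩
    · ext z
      rw [mem_fusion]
      simp only [Finset.mem_inter]
      constructor
      · rintro (⟨⟨hz, _⟩, _⟩ | ⟨⟨hz, _⟩, _⟩) <;> exact hz
      · intro hz
        have hsz : star z ∉ S := hSσ z hz
        rcases Finset.mem_union.mp (hSsub hz) with h | h
        · exact Or.inl ⟨⟨hz, h⟩, fun hc => hsz hc.1⟩
        · exact Or.inr ⟨⟨hz, h⟩, fun hc => hsz hc.1⟩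

theorem stmt_11 (star : α → α) (hinv : Function.Involutive star)
    (hne : ∀ x, star x ≠ x) (A : Finset α) (hA : IsSigmaSet star A)
    (n : ℕ) (hn : A.card = n) :
    (genSpace star A (A.image star)).card = 3 ^ n := by
  rw [genSpace_eq star hinv A hA, count_aux star hinv hne A hA, hn]
end

section
/- Let M be a σ-set with antiset M⁻ = star '' M, and let X be a finite set disjoint from M ∪ M⁻ and itself containing no pair {x, star x}. Then (X ⊕ M) ⊕ M⁻ = X. -/
variable {α : Type*} [DecidableEq α]

theorem stmt_15 (star : α → α) (hinv : Function.Involutive star)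
    (hne : ∀ x, star x ≠ x) (M : Finset α) (hM : IsSigmaSet star M)
    (X : Finset α) (hdisj : Disjoint X (M ∪ M.image star))
    (hX : IsSigmaSet star X) :
    fusion star (fusion star X M) (M.image star) = X := by
  have himg : ∀ y : α, star y ∈ M.image star ↔ y ∈ M := by
    intro y
    simp only [Finset.mem_image]
    constructor
    · rintro ⟨a, ha, h⟩
      rwa [hinv.injective h] at ha
    · exact fun h => ⟨y, h, rfl⟩
  have hXM : ∀ y ∈ X, y ∉ M := fun y hy hm =>
    (Finset.disjoint_left.mp hdisj hy) (Finset.mem_union_left _ hm)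
  have hXM' : ∀ y ∈ X, star y ∉ M := fun y hy hm =>
    (Finset.disjoint_left.mp hdisj hy)
      (Finset.mem_union_right _ (Finset.mem_image.mpr ⟨star y, hm, hinv y⟩))
  have hsXM : sInter star X M = ∅ := by
    rw [sInter, Finset.filter_eq_empty_iff]
    exact hXM'
  have hsMX : sInter star M X = ∅ := by
    rw [sInter, Finset.filter_eq_empty_iff]
    intro y hy hsy
    exact hXM' _ hsy (by rwa [hinv])
  have hfus : fusion star X M = X ∪ M := by
    rw [fusion, sDiff, sDiff, hsXM, hsMX, Finset.sdiff_empty, Finset.sdiff_empty]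
  have h2 : sInter star (X ∪ M) (M.image star) = M := by
    ext y
    simp only [sInter, Finset.mem_filter, Finset.mem_union, himg]
    constructor
    · rintro ⟨h | h, hm⟩
      · exact absurd hm (hXM _ h)
      · exact hm
    · exact fun h => ⟨Or.inr h, h⟩
  have h3 : sInter star (M.image star) (X ∪ M) = M.image star := by
    rw [sInter, Finset.filter_eq_self]
    intro y hy
    rcases Finset.mem_image.mp hy with ⟨a, ha, rfl⟩
    rw [hinv]
    exact Finset.mem_union_right _ ha
  rw [hfus, fusion, sDiff, sDiff, h2, h3, Finset.sdiff_self, Finset.union_empty]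
  ext y
  simp only [Finset.mem_sdiff, Finset.mem_union]
  constructor
  · rintro ⟨h | h, hm⟩
    · exact h
    · exact absurd h hm
  · exact fun h => ⟨Or.inl h, hXM _ h⟩
end

section
/- Let A be a σ-set and M, N ∈ 3^A with M ∗∩ N = ∅ (the equation X ⊕ M = N is 'fusionable'). Then X = N ⊕ M⁻ (where M⁻ = star '' M) satisfies X ⊕ M = N; that is, the fusionable σ-set equation X ⊕ M = N has N ⊕ M⁻ as a solution. -/
variable {α : Type*} [DecidableEq α]

theorem stmt_16 (star : α → α) (hinv : Function.Involutive star)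
    (hne : ∀ x, star x ≠ x) (A : Finset α) (hA : IsSigmaSet star A)
    (M N : Finset α) (hM : M ∈ genSpace star A (A.image star))
    (hN : N ∈ genSpace star A (A.image star))
    (hfus : sInter star M N = ∅) :
    fusion star (fusion star N (M.image star)) M = N := by
  have hMN : ∀ x, x ∈ M → star x ∉ N := by
    intro x hx hsx
    have : x ∈ sInter star M N := Finset.mem_filter.mpr ⟨hx, hsx⟩
    rw [hfus] at this
    exact absurd this (Finset.notMem_empty x)
  have himg : ∀ x, x ∈ M.image star ↔ star x ∈ M := by
    intro x
    simp only [Finset.mem_image]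
    constructor
    · rintro ⟨a, ha, rfl⟩; rwa [hinv]
    · intro h; exact ⟨star x, h, hinv x⟩
  ext x
  have h1 := hMN x
  have h2 := hMN (star x)
  rw [hinv x] at h2
  simp only [fusion, sDiff, sInter, Finset.mem_union, Finset.mem_sdiff,
    Finset.mem_filter, himg, hinv x]
  tauto
end

section
/- The σ-set equation X ⊕ M = M over the integer space 3^A has exactly the subsets of M as solutions: for M ∈ 3^A and X ∈ 3^A, X ⊕ M = M if and only if X ⊆ M. -/
variable {α : Type*} [DecidableEq α]

theorem stmt_18 (star : α → α) (hinv : Function.Involutive star)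
    (hne : ∀ x, star x ≠ x) (A : Finset α) (hA : IsSigmaSet star A)
    (M X : Finset α) (hM : M ∈ genSpace star A (A.image star))
    (hX : X ∈ genSpace star A (A.image star)) :
    fusion star X M = M ↔ X ⊆ M := by
  have hmemf : ∀ (Y Z : Finset α) (x : α),
      x ∈ fusion star Y Z ↔ (x ∈ Y ∧ star x ∉ Z) ∨ (x ∈ Z ∧ star x ∉ Y) := by
    intro Y Z x
    simp only [fusion, sDiff, sInter, Finset.mem_union, Finset.mem_sdiff,
      Finset.mem_filter]
    tauto
  -- elements of the generated space are σ-sets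
  have hsig : ∀ W ∈ genSpace star A (A.image star), IsSigmaSet star W := by
    intro W hW
    simp only [genSpace, Finset.mem_image, Finset.mem_product, Finset.mem_powerset,
      Prod.exists] at hW
    obtain ⟨Y, Z, ⟨hY, hZ⟩, rfl⟩ := hW
    intro x hx hsx
    rw [hmemf] at hx hsx
    have hZA : ∀ y ∈ Z, star y ∈ A := by
      intro y hy
      obtain ⟨a, ha, rfl⟩ := Finset.mem_image.mp (hZ hy)
      rwa [hinv a]
    rcases hx with ⟨hx1, hx2⟩ | ⟨hx1, hx2⟩ <;>
      rcases hsx with ⟨h1, h2⟩ | ⟨h1, h2⟩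
    · exact hA x (hY hx1) (hY h1)
    · exact hx2 h1
    · exact hx2 h1
    · exact hA (star x) (hZA x hx1) (hZA (star x) h1)
  have hXs := hsig X hX
  have hMs := hsig M hM
  constructor
  · intro h x hx
    by_cases hsx : star x ∈ M
    · exfalso
      have : star x ∉ fusion star X M := by
        rw [hmemf]
        push_neg
        refine ⟨fun h1 => absurd h1 (hXs x hx), fun _ => ?_⟩
        rw [hinv]; exact hx
      rw [h] at this
      exact this hsx
    · have : x ∈ fusion star X M := by
        rw [hmemf]; exact Or.inl ⟨hx, hsx⟩
      rwa [h] at this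
  · intro hXM
    ext x
    rw [hmemf]
    constructor
    · rintro (⟨h1, _⟩ | ⟨h1, _⟩)
      · exact hXM h1
      · exact h1
    · intro hx
      refine Or.inr ⟨hx, fun h => hMs x hx (hXM h)⟩
end
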